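/- Let F be an upper-truncated Gaussian with parameters (μ, σx²) truncated at f*, and let G ∼ N(μ, σx²) be untruncated. Then the differential entropy of F is at most the differential entropy of G, i.e., H(F) ≤ (1/2) log(2π e σx²), with equality only in the limit f* → ∞. Equivalently, for all h ∈ ℝ, h ψ(h)/(2Ψ(h)) − log Ψ(h) ≥ 0. -/

import Mathlib

/-!
For `h ≥ 0` both terms of `hψ(h)/(2Ψ(h)) - log Ψ(h)` are nonnegative. For `h ≤ 0` multiply by
`2Ψ(h)`: the resulting gap `g(h) = hψ(h) - 2Ψ(h) log Ψ(h)` has derivative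
`ψ(h)(-1 - h² - 2 log Ψ(h))`. Comparing `ψ(u) ≤ e^{-h²/2} ψ(u - h)` for `u ≤ h ≤ 0` gives
`Ψ(h) ≤ e^{-h²/2} Ψ(0) = e^{-h²/2}/2 < e^{-(1 + h²)/2}`, so `g` is nondecreasing on `(-∞, 0]`;
as `g → 0` at `-∞`, it is nonnegative there. The entropy bound is the same inequality.
-/

open MeasureTheory ProbabilityTheory Real

/-- Gaussian density N(z; m, s²). -/
noncomputable def gauss (m s2 z : ℝ) : ℝ :=
  (Real.sqrt (2 * Real.pi * s2))⁻¹ * Real.exp (-(z - m) ^ 2 / (2 * s2))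

/-- Standard Gaussian density ψ. -/
noncomputable def stdPdf (t : ℝ) : ℝ := gauss 0 1 t

/-- Standard Gaussian CDF Ψ. -/
noncomputable def stdCdf (t : ℝ) : ℝ := ∫ u in Set.Iic t, stdPdf u

open Set Filter Topology

lemma MonotoneOn.le_of_tendsto_atBot {α β : Type*} [SemilatticeInf α] [Nonempty α]
    [TopologicalSpace β] [Preorder β] [OrderClosedTopology β] {f : α → β} {a b : α} {L : β}
    (hf : MonotoneOn f (Iic a)) (hlim : Tendsto f atBot (𝓝 L)) (hb : b ≤ a) : L ≤ f b :=
  le_of_tendsto hlim <| by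
    filter_upwards [eventually_le_atBot b] with t ht
    exact hf (mem_Iic.2 (ht.trans hb)) (mem_Iic.2 hb) ht

lemma hasDerivAt_setIntegral_Iic {E : Type*} [NormedAddCommGroup E] [NormedSpace ℝ E]
    [CompleteSpace E] {f : ℝ → E} (hf : Integrable f) (hc : Continuous f) (x : ℝ) :
    HasDerivAt (fun y ↦ ∫ t in Iic y, f t) (f x) x := by
  have hsplit :
      (fun y ↦ ∫ t in Iic y, f t) = fun y ↦ (∫ t in Iic 0, f t) + ∫ t in (0)..y, f t := by
    ext y
    rw [← intervalIntegral.integral_Iic_sub_Iic hf.integrableOn hf.integrableOn]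
    abel
  rw [hsplit]
  exact (intervalIntegral.integral_hasDerivAt_right hf.intervalIntegrable
    hc.aestronglyMeasurable.stronglyMeasurableAtFilter hc.continuousAt).const_add _

lemma stdPdf_eq_gaussianPDFReal : stdPdf = gaussianPDFReal 0 1 := by
  ext t
  simp [stdPdf, gauss, gaussianPDFReal]

lemma stdPdf_eq (t : ℝ) : stdPdf t = (√(2 * π))⁻¹ * exp (-t ^ 2 / 2) := by
  simp [stdPdf, gauss]

lemma stdPdf_neg (t : ℝ) : stdPdf (-t) = stdPdf t := by
  simp [stdPdf_eq]

lemma stdPdf_pos (t : ℝ) : 0 < stdPdf t := by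
  rw [stdPdf_eq_gaussianPDFReal]
  exact gaussianPDFReal_pos _ _ _ one_ne_zero

lemma integrable_stdPdf : Integrable stdPdf :=
  stdPdf_eq_gaussianPDFReal ▸ integrable_gaussianPDFReal 0 1

lemma integral_stdPdf : ∫ t, stdPdf t = 1 :=
  stdPdf_eq_gaussianPDFReal ▸ integral_gaussianPDFReal_eq_one 0 one_ne_zero

lemma continuous_stdPdf : Continuous stdPdf := by
  rw [funext stdPdf_eq]
  fun_prop

lemma hasDerivAt_stdPdf (t : ℝ) : HasDerivAt stdPdf (-t * stdPdf t) t := by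
  have hexponent : HasDerivAt (fun u : ℝ ↦ -u ^ 2 / 2) (-t) t :=
    ((hasDerivAt_pow 2 t).neg.div_const 2).congr_deriv (by push_cast; ring)
  rw [funext stdPdf_eq]
  exact (hexponent.exp.const_mul (√(2 * π))⁻¹).congr_deriv (by beta_reduce; ring)

lemma tendsto_mul_stdPdf_atBot : Tendsto (fun t ↦ t * stdPdf t) atBot (𝓝 0) := by
  have h := ((tendsto_rpow_abs_mul_exp_neg_mul_sq_cocompact (a := 1 / 2) (by norm_num)
    1).mono_left atBot_le_cocompact).const_mul (√(2 * π))⁻¹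
  rw [mul_zero] at h
  refine tendsto_zero_iff_norm_tendsto_zero.2 (h.congr fun t ↦ ?_)
  rw [Real.norm_eq_abs, stdPdf_eq, abs_mul,
    abs_of_nonneg (by positivity : 0 ≤ (√(2 * π))⁻¹ * exp (-t ^ 2 / 2)), rpow_one]
  ring_nf

lemma stdPdf_le_exp_mul_stdPdf_sub {h u : ℝ} (hh : h ≤ 0) (hu : u ≤ h) :
    stdPdf u ≤ exp (-h ^ 2 / 2) * stdPdf (u - h) := by
  rw [stdPdf_eq, stdPdf_eq, mul_left_comm, ← exp_add]
  gcongr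
  nlinarith

lemma stdCdf_eq_cdf : stdCdf = cdf (gaussianReal 0 1) := by
  ext t
  rw [cdf_eq_real, measureReal_def, gaussianReal_apply_eq_integral _ one_ne_zero,
    ENNReal.toReal_ofReal
      (setIntegral_nonneg measurableSet_Iic fun _ _ ↦ gaussianPDFReal_nonneg _ _ _),
    stdCdf, stdPdf_eq_gaussianPDFReal]

lemma stdCdf_le_one (t : ℝ) : stdCdf t ≤ 1 := stdCdf_eq_cdf ▸ cdf_le_one _ t

lemma tendsto_stdCdf_atBot : Tendsto stdCdf atBot (𝓝 0) := stdCdf_eq_cdf ▸ tendsto_cdf_atBot _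

lemma hasDerivAt_stdCdf (t : ℝ) : HasDerivAt stdCdf (stdPdf t) t :=
  hasDerivAt_setIntegral_Iic integrable_stdPdf continuous_stdPdf t

lemma stdCdf_pos (t : ℝ) : 0 < stdCdf t := by
  have hsupp : Function.support stdPdf = univ :=
    eq_univ_of_forall fun u ↦ (stdPdf_pos u).ne'
  rw [stdCdf, setIntegral_pos_iff_support_of_nonneg_ae
    (ae_of_all _ fun u ↦ (stdPdf_pos u).le) integrable_stdPdf.integrableOn, hsupp, univ_inter]
  simp

lemma stdCdf_zero : stdCdf 0 = 1 / 2 := by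
  have hsymm : ∫ u in Iic 0, stdPdf u = ∫ u in Ioi 0, stdPdf u := by
    simpa [stdPdf_neg] using integral_comp_neg_Iic 0 stdPdf
  have htotal : (∫ u in Iic 0, stdPdf u) + ∫ u in Ioi 0, stdPdf u = 1 := by
    rw [← setIntegral_union (Iic_disjoint_Ioi le_rfl) measurableSet_Ioi
      integrable_stdPdf.integrableOn integrable_stdPdf.integrableOn, Iic_union_Ioi,
      Measure.restrict_univ, integral_stdPdf]
  rw [stdCdf]
  linarith

lemma setIntegral_Iic_stdPdf_sub (h : ℝ) : ∫ u in Iic h, stdPdf (u - h) = stdCdf 0 := by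
  rw [stdCdf, ← (measurePreserving_sub_right volume h).setIntegral_preimage_emb
    (MeasurableEquiv.subRight h).measurableEmbedding stdPdf (Iic 0)]
  congr 1
  ext u
  simp

lemma stdCdf_le_of_nonpos {h : ℝ} (hh : h ≤ 0) : stdCdf h ≤ exp (-h ^ 2 / 2) / 2 :=
  calc stdCdf h ≤ ∫ u in Iic h, exp (-h ^ 2 / 2) * stdPdf (u - h) :=
        setIntegral_mono_on integrable_stdPdf.integrableOn
          ((integrable_stdPdf.comp_sub_right h).const_mul _).integrableOn measurableSet_Iic
          fun _ hu ↦ stdPdf_le_exp_mul_stdPdf_sub hh hu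
    _ = exp (-h ^ 2 / 2) / 2 := by
        rw [integral_const_mul, setIntegral_Iic_stdPdf_sub, stdCdf_zero, mul_one_div]

lemma log_stdCdf_le_of_nonpos {h : ℝ} (hh : h ≤ 0) : log (stdCdf h) ≤ -(1 + h ^ 2) / 2 :=
  calc log (stdCdf h) ≤ log (exp (-h ^ 2 / 2) / 2) :=
        log_le_log (stdCdf_pos h) (stdCdf_le_of_nonpos hh)
    _ = -h ^ 2 / 2 - log 2 := by rw [log_div (exp_pos _).ne' two_ne_zero, log_exp]
    _ ≤ -(1 + h ^ 2) / 2 := by linarith [log_two_gt_d9]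

noncomputable def scaledEntropyGap (h : ℝ) : ℝ := h * stdPdf h + 2 * negMulLog (stdCdf h)

lemma hasDerivAt_scaledEntropyGap (h : ℝ) :
    HasDerivAt scaledEntropyGap (stdPdf h * (-1 - h ^ 2 - 2 * log (stdCdf h))) h := by
  have hlog := (hasDerivAt_negMulLog (stdCdf_pos h).ne').comp h (hasDerivAt_stdCdf h)
  exact (((hasDerivAt_id h).mul (hasDerivAt_stdPdf h)).add (hlog.const_mul 2)).congr_deriv
    (by simp only [id]; ring)

lemma monotoneOn_scaledEntropyGap : MonotoneOn scaledEntropyGap (Iic 0) := by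
  refine monotoneOn_of_hasDerivWithinAt_nonneg (convex_Iic 0)
    (fun h _ ↦ (hasDerivAt_scaledEntropyGap h).continuousAt.continuousWithinAt)
    (fun h _ ↦ (hasDerivAt_scaledEntropyGap h).hasDerivWithinAt) fun h hh ↦ ?_
  rw [interior_Iic] at hh
  have := log_stdCdf_le_of_nonpos hh.le
  exact mul_nonneg (stdPdf_pos h).le (by linarith)

lemma tendsto_scaledEntropyGap_atBot : Tendsto scaledEntropyGap atBot (𝓝 0) := by
  have hnegMulLog := ((continuous_negMulLog.tendsto 0).comp tendsto_stdCdf_atBot).const_mul 2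
  have hsum := tendsto_mul_stdPdf_atBot.add hnegMulLog
  rwa [negMulLog_zero, mul_zero, add_zero] at hsum

lemma scaledEntropyGap_nonneg (h : ℝ) : 0 ≤ scaledEntropyGap h := by
  rcases le_or_gt h 0 with hh | hh
  · exact monotoneOn_scaledEntropyGap.le_of_tendsto_atBot tendsto_scaledEntropyGap_atBot hh
  · exact add_nonneg (mul_nonneg hh.le (stdPdf_pos h).le)
      (mul_nonneg zero_le_two (negMulLog_nonneg (stdCdf_pos h).le (stdCdf_le_one h)))

lemma log_stdCdf_le_mul_stdPdf_div (h : ℝ) :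
    log (stdCdf h) ≤ h * stdPdf h / (2 * stdCdf h) := by
  have hgap := scaledEntropyGap_nonneg h
  rw [scaledEntropyGap, negMulLog] at hgap
  rw [le_div_iff₀ (by linarith [stdCdf_pos h])]
  linarith

theorem stmt_8_general (μ σx fstar : ℝ) :
    (let h := (fstar - μ) / σx
     (1 / 2) * Real.log (2 * Real.pi * Real.exp 1 * σx ^ 2) + Real.log (stdCdf h) -
        h * stdPdf h / (2 * stdCdf h) ≤
       (1 / 2) * Real.log (2 * Real.pi * Real.exp 1 * σx ^ 2)) ∧
    ∀ h : ℝ, 0 ≤ h * stdPdf h / (2 * stdCdf h) - Real.log (stdCdf h) := by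
  refine ⟨?_, fun h ↦ sub_nonneg.2 (log_stdCdf_le_mul_stdPdf_div h)⟩
  have := log_stdCdf_le_mul_stdPdf_div ((fstar - μ) / σx)
  dsimp only
  linarith

theorem stmt_8 (μ σx fstar : ℝ) (hσx : 0 < σx) :
    (let h := (fstar - μ) / σx
     (1 / 2) * Real.log (2 * Real.pi * Real.exp 1 * σx ^ 2) + Real.log (stdCdf h) -
        h * stdPdf h / (2 * stdCdf h) ≤
       (1 / 2) * Real.log (2 * Real.pi * Real.exp 1 * σx ^ 2)) ∧
    ∀ h : ℝ, 0 ≤ h * stdPdf h / (2 * stdCdf h) - Real.log (stdCdf h) :=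
  stmt_8_general μ σx fstar
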